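/- arXiv:1810.01183 — 2 statements merged into one kernel-verified Lean document; each statement's English description precedes it below -/
import Mathlib

section
/- Let d ≥ 1, σ ≥ 0 and M > 0. Let K(t,s), for 0 < s < t < ∞, be bounded linear operators on L^2(ℝ^d;ℂ) such that ‖K(t,s)‖ ≤ M for all t > s > 0 and such that (t,s) ↦ K(t,s)u is strongly measurable on {(t,s) : 0 < s < t} for each u ∈ L^2(ℝ^d;ℂ). Let f : (0,∞) → L^2(ℝ^d;ℂ) be strongly measurable with ∫_0^∞ ‖f(s)‖_{L^2}^2 s^{−1−σ} ds < ∞. Then for every t > 0 the Bochner integral u(t) := ∫_0^t K(t,s) f(s) ds exists in L^2(ℝ^d;ℂ), and there is a constant C depending only on σ such that ∫_0^∞ ‖u(t)‖_{L^2}^2 t^{−3−σ} dt ≤ C M^2 ∫_0^∞ ‖f(s)‖_{L^2}^2 s^{−1−σ} ds. -/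
/-!
With `α = (1 + σ) / 2`, Cauchy–Schwarz against the weight `s ^ α` gives
`(∫₀ᵗ ‖f‖)² ≤ t ^ (1 + α) ∫₀ᵗ ‖f s‖² s ^ (-α) ds`. Integrating against `t ^ (-3 - σ)` and
exchanging the order of integration, the inner integral `∫ₛ^∞ t ^ (-1 - α) dt = s ^ (-α) / α`
turns the weight `s ^ (-α)` into `s ^ (-1 - σ)`, which gives the bound with `C = 2 / (1 + σ)`;
the bound `‖K(t,s)‖ ≤ M` reduces the operator integral to `∫₀ᵗ ‖f‖`. Cauchy–Schwarz against
`s ^ (1 + σ)` shows that `∫₀ᵗ ‖f‖` is finite, so the Bochner integrals exist.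
-/

open MeasureTheory Set
open scoped ENNReal

theorem stronglyMeasurable_clm_apply_of_forall {α 𝕜 E F : Type*} [MeasurableSpace α]
    [NormedField 𝕜] [NormedAddCommGroup E] [NormedSpace 𝕜 E]
    [NormedAddCommGroup F] [NormedSpace 𝕜 F] {T : α → E →L[𝕜] F}
    (hT : ∀ u, StronglyMeasurable fun a => T a u) {f : α → E} (hf : StronglyMeasurable f) :
    StronglyMeasurable fun a => T a (f a) := by
  have simple : ∀ φ : SimpleFunc α E, StronglyMeasurable fun a => T a (φ a) := by
    refine SimpleFunc.induction (fun c s hs => ?_) (fun φ ψ _ hφ hψ => ?_)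
    · convert (hT c).indicator hs using 1
      ext a
      by_cases ha : a ∈ s <;> simp [ha]
    · simp only [SimpleFunc.coe_add, Pi.add_apply, map_add]
      exact hφ.add hψ
  exact stronglyMeasurable_of_tendsto _ (fun n => simple (hf.approx n))
    (tendsto_pi_nhds.2 fun a => ((T a).continuous.tendsto _).comp (hf.tendsto_approx a))

theorem aestronglyMeasurable_restrict_of_stronglyMeasurable_restrict {α β : Type*}
    [MeasurableSpace α] [TopologicalSpace β] {μ : Measure α} {s : Set α} (hs : MeasurableSet s)
    {g : α → β} (hg : StronglyMeasurable (s.domRestrict g)) :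
    AEStronglyMeasurable g (μ.restrict s) := by
  rw [← map_comap_subtype_coe hs, (MeasurableEmbedding.subtype_coe hs).aestronglyMeasurable_map_iff]
  exact hg.aestronglyMeasurable

theorem aestronglyMeasurable_restrict_Ioo_clm_apply {𝕜 E F : Type*} [NormedField 𝕜]
    [NormedAddCommGroup E] [NormedSpace 𝕜 E] [NormedAddCommGroup F] [NormedSpace 𝕜 F]
    {K : ℝ → ℝ → E →L[𝕜] F}
    (hK : ∀ u, StronglyMeasurable fun q : {q : ℝ × ℝ // 0 < q.2 ∧ q.2 < q.1} => K q.1.1 q.1.2 u)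
    {f : ℝ → E} (hf : StronglyMeasurable f) (t : ℝ) :
    AEStronglyMeasurable (fun s => K t s (f s)) (volume.restrict (Ioo 0 t)) := by
  have slice : ∀ u, StronglyMeasurable fun s : Ioo (0 : ℝ) t => K t s u := fun u =>
    (hK u).comp_measurable (g := fun s : Ioo (0 : ℝ) t =>
      (⟨(t, s), s.2.1, s.2.2⟩ : {q : ℝ × ℝ // 0 < q.2 ∧ q.2 < q.1}))
      (measurable_const.prodMk measurable_subtype_coe).subtype_mk
  exact aestronglyMeasurable_restrict_of_stronglyMeasurable_restrict measurableSet_Ioo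
    (stronglyMeasurable_clm_apply_of_forall slice (hf.comp_measurable measurable_subtype_coe))

theorem lintegral_enorm_clm_apply_le {α 𝕜 E F : Type*} [MeasurableSpace α] {μ : Measure α}
    [NontriviallyNormedField 𝕜] [NormedAddCommGroup E] [NormedSpace 𝕜 E]
    [NormedAddCommGroup F] [NormedSpace 𝕜 F] {T : α → E →L[𝕜] F} {M : ℝ}
    (hT : ∀ᵐ a ∂μ, ‖T a‖ ≤ M) (f : α → E) :
    ∫⁻ a, ‖T a (f a)‖ₑ ∂μ ≤ ENNReal.ofReal M * ∫⁻ a, ‖f a‖ₑ ∂μ := by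
  rw [← lintegral_const_mul' _ _ ENNReal.ofReal_ne_top]
  refine lintegral_mono_ae (hT.mono fun a ha => (T a).le_opENorm (f a) |>.trans ?_)
  gcongr
  rw [← ofReal_norm]
  exact ENNReal.ofReal_le_ofReal ha

theorem ENNReal.ofReal_norm_sq_mul {E : Type*} [SeminormedAddGroup E] (x : E) (w : ℝ) :
    ENNReal.ofReal (‖x‖ ^ 2 * w) = ‖x‖ₑ ^ 2 * ENNReal.ofReal w := by
  rw [ENNReal.ofReal_mul (by positivity), ENNReal.ofReal_pow (norm_nonneg x), ofReal_norm]

theorem ENNReal.lintegral_mul_sq_le {α : Type*} [MeasurableSpace α] {μ : Measure α}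
    {f g : α → ℝ≥0∞} (hf : AEMeasurable f μ) (hg : AEMeasurable g μ) :
    (∫⁻ a, f a * g a ∂μ) ^ 2 ≤ (∫⁻ a, f a ^ 2 ∂μ) * ∫⁻ a, g a ^ 2 ∂μ := by
  have := ENNReal.rpow_le_rpow
    (ENNReal.lintegral_mul_le_Lp_mul_Lq μ Real.HolderConjugate.two_two hf hg) zero_le_two
  rw [ENNReal.mul_rpow_of_nonneg _ _ zero_le_two, ← ENNReal.rpow_mul, ← ENNReal.rpow_mul] at this
  norm_num at this
  simpa only [ENNReal.rpow_two] using this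

theorem lintegral_sq_le_lintegral_rpow_mul {μ : Measure ℝ} (hμ : ∀ᵐ s ∂μ, 0 < s)
    {g : ℝ → ℝ≥0∞} (hg : AEMeasurable g μ) (p : ℝ) :
    (∫⁻ s, g s ∂μ) ^ 2
      ≤ (∫⁻ s, ENNReal.ofReal (s ^ p) ∂μ) * ∫⁻ s, g s ^ 2 * ENNReal.ofReal (s ^ (-p)) ∂μ := by
  have split : ∀ s : ℝ, 0 < s →
      g s = ENNReal.ofReal (s ^ (p / 2)) * (g s * ENNReal.ofReal (s ^ (-p / 2))) := by
    intro s hs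
    rw [mul_left_comm, ← ENNReal.ofReal_mul (by positivity), ← Real.rpow_add hs, neg_div,
      add_neg_cancel, Real.rpow_zero, ENNReal.ofReal_one, mul_one]
  have sq_rpow : ∀ s : ℝ, 0 < s → ∀ q : ℝ,
      ENNReal.ofReal (s ^ (q / 2)) ^ 2 = ENNReal.ofReal (s ^ q) := by
    intro s hs q
    rw [← ENNReal.ofReal_pow (by positivity), ← Real.rpow_mul_natCast hs.le]
    norm_num
  calc (∫⁻ s, g s ∂μ) ^ 2
      = (∫⁻ s, ENNReal.ofReal (s ^ (p / 2)) * (g s * ENNReal.ofReal (s ^ (-p / 2))) ∂μ) ^ 2 := by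
        rw [lintegral_congr_ae (hμ.mono split)]
    _ ≤ _ := ENNReal.lintegral_mul_sq_le (by fun_prop) (hg.mul (by fun_prop))
    _ = _ := by
        congr 1
        · exact lintegral_congr_ae (hμ.mono fun s hs => sq_rpow s hs p)
        · refine lintegral_congr_ae (hμ.mono fun s hs => ?_)
          dsimp only
          rw [mul_pow, sq_rpow s hs]

theorem lintegral_Ioo_rpow_le {p : ℝ} (hp : 0 ≤ p) (t : ℝ) :
    ∫⁻ s in Ioo 0 t, ENNReal.ofReal (s ^ p) ≤ ENNReal.ofReal (t ^ p) * ENNReal.ofReal t :=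
  calc ∫⁻ s in Ioo 0 t, ENNReal.ofReal (s ^ p) ≤ ∫⁻ _ in Ioo 0 t, ENNReal.ofReal (t ^ p) :=
        setLIntegral_mono measurable_const fun s hs =>
          ENNReal.ofReal_le_ofReal (Real.rpow_le_rpow hs.1.le hs.2.le hp)
    _ = ENNReal.ofReal (t ^ p) * ENNReal.ofReal t := by
        rw [setLIntegral_const, Real.volume_Ioo, sub_zero]

theorem lintegral_Ioi_rpow_of_lt {a c : ℝ} (ha : a < -1) (hc : 0 < c) :
    ∫⁻ t in Ioi c, ENNReal.ofReal (t ^ a) = ENNReal.ofReal (-c ^ (a + 1) / (a + 1)) := by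
  rw [← integral_Ioi_rpow_of_lt ha hc, ofReal_integral_eq_lintegral_ofReal
    (integrableOn_Ioi_rpow_of_lt ha hc)
    (ae_restrict_of_forall_mem measurableSet_Ioi fun t ht => Real.rpow_nonneg (hc.trans ht).le a)]

theorem lintegral_Ioi_mul_lintegral_Ioo {h k : ℝ → ℝ≥0∞} (hh : Measurable h) (hk : Measurable k) :
    ∫⁻ t in Ioi 0, k t * ∫⁻ s in Ioo 0 t, h s = ∫⁻ s in Ioi 0, h s * ∫⁻ t in Ioi s, k t := by
  set F : ℝ → ℝ → ℝ≥0∞ := fun t s =>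
    {p : ℝ × ℝ | 0 < p.2 ∧ p.2 < p.1}.indicator (fun p => k p.1 * h p.2) (t, s)
  have hF : Measurable (Function.uncurry F) :=
    ((hk.comp measurable_fst).mul (hh.comp measurable_snd)).indicator
      ((measurableSet_lt measurable_const measurable_snd).inter
        (measurableSet_lt measurable_snd measurable_fst))
  have slice_t : ∀ t, k t * ∫⁻ s in Ioo 0 t, h s = ∫⁻ s in Ioi 0, F t s := by
    intro t
    have : (fun s => F t s) = (Ioo 0 t).indicator (fun s => k t * h s) := by
      ext s; simp [F, indicator, mem_Ioo]
    rw [this, setLIntegral_indicator measurableSet_Ioo, Ioo_inter_Ioi, max_self,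
      lintegral_const_mul _ hh]
  have slice_s : EqOn (fun s => h s * ∫⁻ t in Ioi s, k t) (fun s => ∫⁻ t in Ioi 0, F t s)
      (Ioi 0) := by
    intro s hs
    have : (fun t => F t s) = (Ioi s).indicator (fun t => k t * h s) := by
      ext t; simp [F, indicator, mem_Ioi.1 hs]
    simp only
    rw [this, setLIntegral_indicator measurableSet_Ioi, Ioi_inter_Ioi, max_eq_left (le_of_lt hs),
      lintegral_mul_const _ hk, mul_comm]
  calc ∫⁻ t in Ioi 0, k t * ∫⁻ s in Ioo 0 t, h s = ∫⁻ t in Ioi 0, ∫⁻ s in Ioi 0, F t s := by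
        simp_rw [slice_t]
    _ = ∫⁻ s in Ioi 0, ∫⁻ t in Ioi 0, F t s := lintegral_lintegral_swap hF.aemeasurable
    _ = ∫⁻ s in Ioi 0, h s * ∫⁻ t in Ioi s, k t :=
        (setLIntegral_congr_fun measurableSet_Ioi slice_s).symm

theorem lintegral_sq_lintegral_Ioo_mul_rpow_le {g : ℝ → ℝ≥0∞} (hg : Measurable g) {σ : ℝ}
    (hσ : -1 < σ) :
    ∫⁻ t in Ioi 0, (∫⁻ s in Ioo 0 t, g s) ^ 2 * ENNReal.ofReal (t ^ (-3 - σ))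
      ≤ ENNReal.ofReal (2 / (1 + σ)) * ∫⁻ s in Ioi 0, g s ^ 2 * ENNReal.ofReal (s ^ (-1 - σ)) := by
  set α := (1 + σ) / 2 with hα
  have hα0 : 0 < α := by linarith
  have pointwise : ∀ t ∈ Ioi (0 : ℝ),
      (∫⁻ s in Ioo 0 t, g s) ^ 2 * ENNReal.ofReal (t ^ (-3 - σ))
        ≤ ENNReal.ofReal (t ^ (-α - 1)) * ∫⁻ s in Ioo 0 t, g s ^ 2 * ENNReal.ofReal (s ^ (-α)) := by
    intro t (ht : 0 < t)
    have hCS := lintegral_sq_le_lintegral_rpow_mul (μ := volume.restrict (Ioo 0 t))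
      (ae_restrict_of_forall_mem measurableSet_Ioo fun s hs => hs.1) hg.aemeasurable α
    calc (∫⁻ s in Ioo 0 t, g s) ^ 2 * ENNReal.ofReal (t ^ (-3 - σ))
        ≤ ENNReal.ofReal (t ^ α) * ENNReal.ofReal t
            * (∫⁻ s in Ioo 0 t, g s ^ 2 * ENNReal.ofReal (s ^ (-α)))
            * ENNReal.ofReal (t ^ (-3 - σ)) := by
          gcongr
          exact hCS.trans (by gcongr; exact lintegral_Ioo_rpow_le hα0.le t)
      _ = _ := by
          rw [mul_right_comm, ← ENNReal.ofReal_mul (by positivity),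
            ← ENNReal.ofReal_mul (by positivity), ← Real.rpow_add_one (ne_of_gt ht),
            ← Real.rpow_add ht]
          congr 3
          rw [hα]
          ring
  have tail : ∀ s ∈ Ioi (0 : ℝ),
      g s ^ 2 * ENNReal.ofReal (s ^ (-α)) * ∫⁻ t in Ioi s, ENNReal.ofReal (t ^ (-α - 1))
        = ENNReal.ofReal (2 / (1 + σ)) * (g s ^ 2 * ENNReal.ofReal (s ^ (-1 - σ))) := by
    intro s (hs : 0 < s)
    have weight : s ^ (-α) * (s ^ (-α) / α) = 2 / (1 + σ) * s ^ (-1 - σ) := by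
      rw [mul_div_assoc', ← Real.rpow_add hs, hα]
      field_simp
      ring_nf
    rw [lintegral_Ioi_rpow_of_lt (by linarith) hs, sub_add_cancel, neg_div_neg_eq, mul_assoc,
      ← ENNReal.ofReal_mul (Real.rpow_nonneg (le_of_lt hs) _), weight,
      ENNReal.ofReal_mul (div_nonneg zero_le_two (by linarith)), mul_left_comm]
  calc ∫⁻ t in Ioi 0, (∫⁻ s in Ioo 0 t, g s) ^ 2 * ENNReal.ofReal (t ^ (-3 - σ))
      ≤ ∫⁻ t in Ioi 0, ENNReal.ofReal (t ^ (-α - 1))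
          * ∫⁻ s in Ioo 0 t, g s ^ 2 * ENNReal.ofReal (s ^ (-α)) :=
        setLIntegral_mono' measurableSet_Ioi pointwise
    _ = ∫⁻ s in Ioi 0, g s ^ 2 * ENNReal.ofReal (s ^ (-α))
          * ∫⁻ t in Ioi s, ENNReal.ofReal (t ^ (-α - 1)) :=
        lintegral_Ioi_mul_lintegral_Ioo (by fun_prop) (by fun_prop)
    _ = ∫⁻ s in Ioi 0, ENNReal.ofReal (2 / (1 + σ)) * (g s ^ 2 * ENNReal.ofReal (s ^ (-1 - σ))) :=
        setLIntegral_congr_fun measurableSet_Ioi tail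
    _ = _ := lintegral_const_mul' _ _ ENNReal.ofReal_ne_top

theorem lintegral_Ioo_lt_top_of_lintegral_sq_mul_rpow_lt_top {g : ℝ → ℝ≥0∞} (hg : AEMeasurable g)
    {σ : ℝ} (hσ : -1 < σ) (hfin : ∫⁻ s in Ioi 0, g s ^ 2 * ENNReal.ofReal (s ^ (-1 - σ)) < ∞)
    (t : ℝ) : ∫⁻ s in Ioo 0 t, g s < ∞ := by
  have hCS := lintegral_sq_le_lintegral_rpow_mul (μ := volume.restrict (Ioo 0 t))
    (ae_restrict_of_forall_mem measurableSet_Ioo fun s hs => hs.1) hg.restrict (1 + σ)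
  rw [neg_add'] at hCS
  have hsq : (∫⁻ s in Ioo 0 t, g s) ^ 2 < ∞ := hCS.trans_lt <| ENNReal.mul_lt_top
    ((lintegral_Ioo_rpow_le (by linarith) t).trans_lt (by finiteness))
    ((lintegral_mono_set Ioo_subset_Ioi_self).trans_lt hfin)
  exact (ENNReal.pow_lt_top_iff.1 hsq).resolve_right two_ne_zero

/-- **Boundedness of the deterministic maximal regularity operator
`𝓜_K f(t) = ∫_0^t K(t,s) f(s) ds` from `T^{2,2}_σ` to `T^{2,2}_{σ+2}`**
(Proposition 6.6 of Portal–Veraar), for an arbitrary uniformly bounded, strongly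
measurable family `{K(t,s) : t > s > 0}` of bounded operators on `L^2(ℝ^d;ℂ)`, using
the identification `T^{2,2}_τ = L^2(ℝ_+ × ℝ^d, dt dx / t^{1+τ})`.  The constant `C`
depends only on `σ`. -/
theorem maximal_regularity_T22
    (σ : ℝ) (hσ : 0 ≤ σ) :
    ∃ C : ℝ, 0 < C ∧
      ∀ (d : ℕ), 1 ≤ d → ∀ (M : ℝ), 0 < M →
      ∀ K : ℝ → ℝ → (Lp ℂ 2 (volume : Measure (EuclideanSpace ℝ (Fin d))))
          →L[ℂ] Lp ℂ 2 (volume : Measure (EuclideanSpace ℝ (Fin d))),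
        (∀ t s : ℝ, 0 < s → s < t → ‖K t s‖ ≤ M) →
        (∀ u : Lp ℂ 2 (volume : Measure (EuclideanSpace ℝ (Fin d))),
          StronglyMeasurable fun q : {q : ℝ × ℝ // 0 < q.2 ∧ q.2 < q.1} =>
            K q.1.1 q.1.2 u) →
        ∀ f : ℝ → Lp ℂ 2 (volume : Measure (EuclideanSpace ℝ (Fin d))),
          StronglyMeasurable f →
          (∫⁻ s in Set.Ioi (0 : ℝ), ENNReal.ofReal (‖f s‖ ^ 2 * s ^ (-1 - σ))) < ⊤ →
          (∀ t : ℝ, 0 < t →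
            IntegrableOn (fun s : ℝ => K t s (f s)) (Set.Ioo 0 t) volume) ∧
          ∫⁻ t in Set.Ioi (0 : ℝ),
              ENNReal.ofReal (‖∫ s in Set.Ioo (0 : ℝ) t, K t s (f s)‖ ^ 2 * t ^ (-3 - σ))
            ≤ ENNReal.ofReal (C * M ^ 2) *
                ∫⁻ s in Set.Ioi (0 : ℝ), ENNReal.ofReal (‖f s‖ ^ 2 * s ^ (-1 - σ)) := by
  have hσ' : -1 < σ := by linarith
  refine ⟨2 / (1 + σ), div_pos two_pos (by linarith), fun d _ M _ K hKM hKmeas f hf hF => ?_⟩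
  simp_rw [ENNReal.ofReal_norm_sq_mul] at hF ⊢
  have hbound : ∀ t, ∫⁻ s in Ioo 0 t, ‖K t s (f s)‖ₑ ≤ ENNReal.ofReal M * ∫⁻ s in Ioo 0 t, ‖f s‖ₑ :=
    fun t => lintegral_enorm_clm_apply_le
      (ae_restrict_of_forall_mem measurableSet_Ioo fun s hs => hKM t s hs.1 hs.2) f
  have hfin : ∀ t, ∫⁻ s in Ioo 0 t, ‖f s‖ₑ < ∞ :=
    lintegral_Ioo_lt_top_of_lintegral_sq_mul_rpow_lt_top hf.enorm.aemeasurable hσ' hF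
  refine ⟨fun t _ => ⟨aestronglyMeasurable_restrict_Ioo_clm_apply hKmeas hf t,
    (hbound t).trans_lt (ENNReal.mul_lt_top ENNReal.ofReal_lt_top (hfin t))⟩, ?_⟩
  calc ∫⁻ t in Ioi 0, ‖∫ s in Ioo 0 t, K t s (f s)‖ₑ ^ 2 * ENNReal.ofReal (t ^ (-3 - σ))
      ≤ ∫⁻ t in Ioi 0, ENNReal.ofReal (M ^ 2) *
          ((∫⁻ s in Ioo 0 t, ‖f s‖ₑ) ^ 2 * ENNReal.ofReal (t ^ (-3 - σ))) := by
        refine lintegral_mono fun t => ?_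
        rw [← mul_assoc, ENNReal.ofReal_pow (by linarith), ← mul_pow]
        gcongr
        exact (enorm_integral_le_lintegral_enorm _).trans (hbound t)
    _ = ENNReal.ofReal (M ^ 2) *
          ∫⁻ t in Ioi 0, (∫⁻ s in Ioo 0 t, ‖f s‖ₑ) ^ 2 * ENNReal.ofReal (t ^ (-3 - σ)) :=
        lintegral_const_mul' _ _ ENNReal.ofReal_ne_top
    _ ≤ ENNReal.ofReal (M ^ 2) * (ENNReal.ofReal (2 / (1 + σ)) *
          ∫⁻ s in Ioi 0, ‖f s‖ₑ ^ 2 * ENNReal.ofReal (s ^ (-1 - σ))) := by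
        gcongr
        exact lintegral_sq_lintegral_Ioo_mul_rpow_le hf.enorm hσ'
    _ = _ := by
        rw [← mul_assoc, ← ENNReal.ofReal_mul (by positivity), mul_comm (M ^ 2)]
end

section
/- Let E and F be Banach spaces with E separable, let (Ω,𝔉) be a measurable space, and let C > 0. Let Λ : Ω → L(E,F) be a map into the bounded linear operators from E to F such that: (i) for every x ∈ E the map ω ↦ Λ(ω)x is measurable; (ii) for every ω ∈ Ω the operator Λ(ω) is bijective; and (iii) ‖x‖_E ≤ C ‖Λ(ω)x‖_F for all ω ∈ Ω and all x ∈ E. Then for every y ∈ F the map ω ↦ Λ(ω)^{-1} y is measurable from Ω to E. -/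
/-!
Write `f ω := Λ(ω)⁻¹ y` and fix a dense sequence `(d k)` in `E`. The residual `‖Λ(ω) x - y‖` is
measurable in `ω`, continuous in `x` and vanishes at `f ω`, so for every `n` some `d k` has residual
below `1/(n+1)`; taking the least such `k` gives a measurable approximation of `f`. The uniform
bound `‖x - f ω‖ ≤ C ‖Λ(ω) x - y‖` makes these approximations converge pointwise to `f`, and
pointwise limits of measurable maps into a metrizable space are measurable.
-/

open MeasureTheory Filter Topology

theorem measurable_of_dist_le_mul_residual {Ω X : Type*} [MeasurableSpace Ω] [PseudoMetricSpace X]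
    [TopologicalSpace.SeparableSpace X] [Nonempty X] [MeasurableSpace X] [BorelSpace X]
    (r : Ω → X → ℝ) (hr_meas : ∀ x, Measurable fun ω => r ω x) (hr_cont : ∀ ω, Continuous (r ω))
    (f : Ω → X) (hrf : ∀ ω, r ω (f ω) = 0) {C : ℝ} (hC : 0 ≤ C)
    (hdist : ∀ ω x, dist x (f ω) ≤ C * r ω x) :
    Measurable f := by
  classical
  obtain ⟨d, hd⟩ := TopologicalSpace.exists_dense_seq X
  have hex : ∀ (n : ℕ) ω, ∃ k, r ω (d k) < 1 / (n + 1) := fun n ω =>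
    hd.exists_mem_open (isOpen_lt (hr_cont ω) continuous_const)
      ⟨f ω, show r ω (f ω) < _ by rw [hrf]; positivity⟩
  have happrox_meas : ∀ n, Measurable fun ω => d (Nat.find (hex n ω)) := fun n =>
    Measurable.find (f := fun k _ => d k) (fun _ => measurable_const)
      (fun k => measurableSet_lt (hr_meas (d k)) measurable_const) (hex n)
  refine measurable_of_tendsto_metrizable happrox_meas (tendsto_pi_nhds.2 fun ω => ?_)
  have hbound : ∀ n : ℕ, dist (d (Nat.find (hex n ω))) (f ω) ≤ C * (1 / (n + 1)) := fun n =>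
    (hdist ω _).trans (mul_le_mul_of_nonneg_left (Nat.find_spec (hex n ω)).le hC)
  refine tendsto_iff_dist_tendsto_zero.2 (squeeze_zero (fun _ => dist_nonneg) hbound ?_)
  simpa using tendsto_one_div_add_atTop_nhds_zero_nat.const_mul C

theorem measurable_inverse_operator_general
    (E : Type*) [NormedAddCommGroup E] [NormedSpace ℝ E]
    [TopologicalSpace.SeparableSpace E] [MeasurableSpace E] [BorelSpace E]
    (F : Type*) [NormedAddCommGroup F] [NormedSpace ℝ F]
    (Ω : Type*) [MeasurableSpace Ω]
    (C : ℝ) (hC : 0 < C)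
    (Λ : Ω → E →L[ℝ] F)
    (hmeas : ∀ x : E, StronglyMeasurable fun ω => Λ ω x)
    (hbij : ∀ ω, Function.Bijective (Λ ω))
    (hbound : ∀ ω (x : E), ‖x‖ ≤ C * ‖Λ ω x‖) :
    ∀ y : F, Measurable fun ω => (Equiv.ofBijective (Λ ω) (hbij ω)).symm y := by
  intro y
  have hinv : ∀ ω, Λ ω ((Equiv.ofBijective (Λ ω) (hbij ω)).symm y) = y := fun ω =>
    (Equiv.ofBijective (Λ ω) (hbij ω)).apply_symm_apply y
  refine measurable_of_dist_le_mul_residual (fun ω x => ‖Λ ω x - y‖)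
    (fun x => ((hmeas x).sub stronglyMeasurable_const).norm.measurable) (fun ω => by fun_prop) _
    (fun ω => by simp [hinv]) hC.le fun ω x => ?_
  simpa [dist_eq_norm, map_sub, hinv] using
    hbound ω (x - (Equiv.ofBijective (Λ ω) (hbij ω)).symm y)

/-- **Strong measurability of the inverse of a strongly measurable operator-valued map**
(Step 1 of the proof of Theorem 3.5 of Portal–Veraar): if `Λ : Ω → L(E,F)` is strongly
measurable, each `Λ(ω)` is bijective and `‖x‖ ≤ C ‖Λ(ω)x‖` uniformly in `ω`, then for
every `y ∈ F` the map `ω ↦ Λ(ω)⁻¹ y` is measurable. -/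
theorem measurable_inverse_operator
    (E : Type*) [NormedAddCommGroup E] [NormedSpace ℝ E] [CompleteSpace E]
    [TopologicalSpace.SeparableSpace E] [MeasurableSpace E] [BorelSpace E]
    (F : Type*) [NormedAddCommGroup F] [NormedSpace ℝ F] [CompleteSpace F]
    (Ω : Type*) [MeasurableSpace Ω]
    (C : ℝ) (hC : 0 < C)
    (Λ : Ω → E →L[ℝ] F)
    (hmeas : ∀ x : E, StronglyMeasurable fun ω => Λ ω x)
    (hbij : ∀ ω, Function.Bijective (Λ ω))
    (hbound : ∀ ω (x : E), ‖x‖ ≤ C * ‖Λ ω x‖) :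
    ∀ y : F, Measurable fun ω => (Equiv.ofBijective (Λ ω) (hbij ω)).symm y :=
  measurable_inverse_operator_general E F Ω C hC Λ hmeas hbij hbound
end
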